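/- Let n = 2m and μ ∈ F_{2^m}^*. Then Σ_{a ∈ F_{2^n} \ F_{2^m}} (-1)^{Tr^n_1(μ (a^2+a)/(a^{2^m}+a))} = -2^m · (-1)^{Tr^m_1(μ)}. -/

import Mathlib

/-!
Put `q = 2^m` and `ψ a = a^q + a`. For `a ∉ F_q` the element `x = μ (a² + a) / ψ a` satisfies
`x + x^q = μ (ψ a + 1)`, so `Tr^n_1 x = Tr^m_1 (μ (ψ a + 1))`. The additive map `ψ` has kernel
and image `F_q`, so summing over all `a ∈ F` gives `q · ∑_{b ∈ F_q} χ(μ (b + 1))`, which is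
`q · ∑_{c ∈ F_q} χ(c) = 0` because the trace of `F_q` is balanced. The `q` elements of `F_q`
each contribute `χ(μ)`, leaving `-q χ(μ)` for the complement.
-/

open Finset

/-- The sign `(-1)^{Tr(y)}` where `Tr(y) = ∑_{i<m} y^{2^i}` is the absolute trace
(valued in the prime field, viewed inside `F`). -/
def chi {F : Type*} [Field F] [DecidableEq F] (m : ℕ) (y : F) : ℤ :=
  if (∑ i ∈ Finset.range m, y ^ 2 ^ i) = 0 then 1 else -1

open Polynomial

section AbsTrace

variable {R : Type*} [CommRing R]

def absTrace (k : ℕ) (x : R) : R := ∑ i ∈ range k, x ^ 2 ^ i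

theorem absTrace_one (x : R) : absTrace 1 x = x := by simp [absTrace]

theorem absTrace_add_length (k l : ℕ) (x : R) :
    absTrace (k + l) x = absTrace k x + absTrace l (x ^ 2 ^ k) := by
  simp only [absTrace, sum_range_add, ← pow_mul, ← pow_add]

variable [CharP R 2]

theorem absTrace_add (k : ℕ) (x y : R) : absTrace k (x + y) = absTrace k x + absTrace k y := by
  simp only [absTrace, add_pow_char_pow, sum_add_distrib]

theorem absTrace_two_mul (k : ℕ) (x : R) : absTrace (2 * k) x = absTrace k (x + x ^ 2 ^ k) := by
  rw [two_mul, absTrace_add_length, absTrace_add]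

theorem absTrace_sq (k : ℕ) (x : R) : absTrace k x ^ 2 = absTrace k (x ^ 2) := by
  simp only [absTrace, sum_pow_char, ← pow_mul, mul_comm]

theorem absTrace_sq_eq_self {k : ℕ} {x : R} (hx : x ^ 2 ^ k = x) :
    absTrace k x ^ 2 = absTrace k x := by
  -- Split off the first and the last term of `absTrace (k + 1) x`.
  have h := absTrace_add_length 1 k x
  rw [add_comm 1 k, absTrace_add_length, hx, pow_one] at h
  simp only [absTrace_one] at h
  rw [absTrace_sq]
  exact (add_left_cancel ((add_comm _ _).trans h)).symm

theorem absTrace_eq_zero_or_eq_one [IsDomain R] {k : ℕ} {x : R} (hx : x ^ 2 ^ k = x) :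
    absTrace k x = 0 ∨ absTrace k x = 1 :=
  eq_zero_or_one_of_sq_eq_self (absTrace_sq_eq_self hx)

end AbsTrace

theorem exists_absTrace_ne_zero {F : Type*} [Field F] {k : ℕ} (hk : k ≠ 0) (s : Finset F)
    (hs : 2 ^ (k - 1) < #s) : ∃ c ∈ s, absTrace k c ≠ 0 := by
  by_contra! h
  -- `∑ X^{2^i}` vanishes on `s`, has degree `2^{k-1}` and linear coefficient `1`.
  have hP : natDegree (∑ i ∈ range k, X ^ 2 ^ i : F[X]) ≤ 2 ^ (k - 1) := by
    refine natDegree_sum_le_of_forall_le _ _ fun i hi => ?_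
    rw [natDegree_X_pow]
    exact Nat.pow_le_pow_right two_pos (by simp at hi; omega)
  have h0 := eq_zero_of_natDegree_lt_card_of_eval_eq_zero' _ s
    (by simpa [eval_finsetSum, absTrace] using h) (hP.trans_lt hs)
  apply_fun (coeff · 1) at h0
  simp [coeff_X_pow, eq_comm (a := 1), Nat.pos_of_ne_zero hk] at h0

section Chi

variable {F : Type*} [Field F] [DecidableEq F]

theorem chi_eq (k : ℕ) (y : F) : chi k y = if absTrace k y = 0 then 1 else -1 := rfl

variable [CharP F 2]

theorem chi_two_mul (k : ℕ) (x : F) : chi (2 * k) x = chi k (x + x ^ 2 ^ k) := by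
  rw [chi_eq, chi_eq, absTrace_two_mul]

theorem chi_add_of_absTrace_eq_one {k : ℕ} {x d : F} (hx : x ^ 2 ^ k = x)
    (hd : absTrace k d = 1) : chi k (x + d) = -chi k x := by
  rcases absTrace_eq_zero_or_eq_one hx with h | h <;>
    simp [chi_eq, absTrace_add, h, hd, CharTwo.add_self_eq_zero]

end Chi

/-- The copy of `F_{2^m}` inside `F` when `F` has `2^{2m}` elements. -/
def frobFixed (F : Type*) [Field F] [Fintype F] [DecidableEq F] (m : ℕ) : Finset F :=
  univ.filter fun b => b ^ 2 ^ m = b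

section FrobFixed

variable {F : Type*} [Field F] [Fintype F] [DecidableEq F]

theorem mem_frobFixed {m : ℕ} {b : F} : b ∈ frobFixed F m ↔ b ^ 2 ^ m = b := by
  simp [frobFixed]

theorem card_frobFixed_le {m : ℕ} (hm : m ≠ 0) : #(frobFixed F m) ≤ 2 ^ m := by
  by_contra! h
  refine FiniteField.X_pow_card_pow_sub_X_ne_zero F hm one_lt_two
    (eq_zero_of_natDegree_lt_card_of_eval_eq_zero' _ (frobFixed F m) (fun b hb => ?_) ?_)
  · simp [mem_frobFixed.1 hb]
  · rwa [FiniteField.X_pow_card_pow_sub_X_natDegree_eq F hm one_lt_two]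

theorem mul_mem_frobFixed_iff {m : ℕ} {μ c : F} (hμ : μ ∈ frobFixed F m) (hμ0 : μ ≠ 0) :
    μ * c ∈ frobFixed F m ↔ c ∈ frobFixed F m := by
  rw [mem_frobFixed, mem_frobFixed, mul_pow, mem_frobFixed.1 hμ, mul_right_inj' hμ0]

theorem sum_frobFixed_mul {M : Type*} [AddCommMonoid M] {m : ℕ} {μ : F}
    (hμ : μ ∈ frobFixed F m) (hμ0 : μ ≠ 0) (g : F → M) :
    ∑ c ∈ frobFixed F m, g (μ * c) = ∑ c ∈ frobFixed F m, g c :=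
  sum_equiv (Equiv.mulLeft₀ μ hμ0) (fun _ => (mul_mem_frobFixed_iff hμ hμ0).symm)
    fun _ _ => rfl

variable [CharP F 2]

theorem add_mem_frobFixed_iff {m : ℕ} {c d : F} (hd : d ∈ frobFixed F m) :
    c + d ∈ frobFixed F m ↔ c ∈ frobFixed F m := by
  rw [mem_frobFixed, mem_frobFixed, add_pow_char_pow, mem_frobFixed.1 hd, add_left_inj]

theorem sum_frobFixed_add {M : Type*} [AddCommMonoid M] {m : ℕ} {d : F}
    (hd : d ∈ frobFixed F m) (g : F → M) :
    ∑ c ∈ frobFixed F m, g (c + d) = ∑ c ∈ frobFixed F m, g c :=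
  sum_equiv (Equiv.addRight d) (fun _ => (add_mem_frobFixed_iff hd).symm) fun _ _ => rfl

theorem sum_chi_frobFixed_eq_zero {m : ℕ} (hm : m ≠ 0) (hcard : #(frobFixed F m) = 2 ^ m) :
    ∑ c ∈ frobFixed F m, chi m c = 0 := by
  obtain ⟨d, hd, hd0⟩ := exists_absTrace_ne_zero hm (frobFixed F m)
    (hcard ▸ Nat.pow_lt_pow_right one_lt_two (by omega))
  have hd1 := (absTrace_eq_zero_or_eq_one (mem_frobFixed.1 hd)).resolve_left hd0
  -- Translating by `d`, of trace `1`, flips every sign.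
  have h := sum_frobFixed_add hd (chi m)
  rw [sum_congr rfl fun c hc => chi_add_of_absTrace_eq_one (mem_frobFixed.1 hc) hd1,
    sum_neg_distrib] at h
  omega

end FrobFixed

theorem AddMonoidHom.sum_comp_eq_card_ker_nsmul {G M β : Type*} [AddGroup G] [Fintype G]
    [AddMonoid M] [DecidableEq M] [AddCommMonoid β] (f : G →+ M) (g : M → β) :
    ∑ a, g (f a) = #{a | f a = 0} • ∑ b ∈ univ.image f, g b := by
  rw [Finset.sum_comp, smul_sum]
  refine sum_congr rfl fun b hb => ?_
  obtain ⟨a, -, rfl⟩ := mem_image.1 hb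
  rw [AddMonoidHom.card_fiber_eq_of_mem_range f ⟨a, rfl⟩ ⟨0, map_zero f⟩]

theorem AddMonoidHom.card_eq_card_ker_mul_card_image {G M : Type*} [AddGroup G] [Fintype G]
    [AddMonoid M] [DecidableEq M] (f : G →+ M) :
    Fintype.card G = #{a | f a = 0} * #(univ.image f) := by
  simpa using f.sum_comp_eq_card_ker_nsmul fun _ => (1 : ℕ)

theorem charP_two_of_card_eq_two_pow {F : Type*} [Field F] [Fintype F] {k : ℕ} (hk : k ≠ 0)
    (hF : Fintype.card F = 2 ^ k) : CharP F 2 :=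
  ringChar.of_eq <| FiniteField.even_card_iff_char_two.2 <| by
    rw [hF, Nat.pow_mod, Nat.mod_self, zero_pow hk, Nat.zero_mod]

theorem pow_two_pow_pow_two_pow {F : Type*} [Field F] [Fintype F] {m : ℕ}
    (hF : Fintype.card F = 2 ^ (2 * m)) (a : F) : (a ^ 2 ^ m) ^ 2 ^ m = a := by
  rw [← pow_mul, ← pow_add, ← two_mul, ← hF, FiniteField.pow_card]

/-- `a ↦ a^{2^m} + a`, the relative trace `Tr^n_m` when `F` has `2^n = 2^{2m}` elements. -/
def relTrace (F : Type*) [Field F] [CharP F 2] (m : ℕ) : F →+ F :=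
  AddMonoidHom.mk' (fun a => a ^ 2 ^ m + a) fun a b => by rw [add_pow_char_pow]; ring

section RelTrace

variable {F : Type*} [Field F] [CharP F 2]

theorem relTrace_apply (m : ℕ) (a : F) : relTrace F m a = a ^ 2 ^ m + a := rfl

theorem relTrace_eq_zero_iff [Fintype F] [DecidableEq F] {m : ℕ} {a : F} :
    relTrace F m a = 0 ↔ a ∈ frobFixed F m := by
  rw [relTrace_apply, CharTwo.add_eq_zero, mem_frobFixed]

theorem add_pow_eq_mul_relTrace_add_one {m : ℕ} {μ a : F} (hμ : μ ^ 2 ^ m = μ)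
    (ha : (a ^ 2 ^ m) ^ 2 ^ m = a) (hv : relTrace F m a ≠ 0) :
    μ * (a ^ 2 + a) / relTrace F m a + (μ * (a ^ 2 + a) / relTrace F m a) ^ 2 ^ m
      = μ * (relTrace F m a + 1) := by
  rw [relTrace_apply] at *
  have hvq : (a ^ 2 ^ m + a) ^ 2 ^ m = a ^ 2 ^ m + a := by
    rw [add_pow_char_pow, ha, add_comm]
  rw [div_pow, mul_pow, hμ, hvq, add_pow_char_pow, ← pow_mul, mul_comm 2, pow_mul,
    ← add_div, div_eq_iff hv]
  linear_combination (-μ) * CharTwo.add_sq (a ^ 2 ^ m) a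

variable [Fintype F] [DecidableEq F] {m : ℕ}

theorem relTrace_mem_frobFixed (hF : Fintype.card F = 2 ^ (2 * m)) (a : F) :
    relTrace F m a ∈ frobFixed F m := by
  rw [mem_frobFixed, relTrace_apply, add_pow_char_pow, pow_two_pow_pow_two_pow hF, add_comm]

theorem image_relTrace_eq_frobFixed (hF : Fintype.card F = 2 ^ (2 * m)) (hm : m ≠ 0) :
    univ.image (relTrace F m) = frobFixed F m ∧ #(frobFixed F m) = 2 ^ m := by
  have hsub : univ.image (relTrace F m) ⊆ frobFixed F m := by
    simpa [subset_iff] using relTrace_mem_frobFixed hF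
  have hcard := (relTrace F m).card_eq_card_ker_mul_card_image
  have hker : ({a | relTrace F m a = 0} : Finset F) = frobFixed F m := by
    ext a; simp [relTrace_eq_zero_iff]
  rw [hF, hker, two_mul, pow_add] at hcard
  have hK : #(frobFixed F m) = 2 ^ m := by
    refine le_antisymm (card_frobFixed_le hm) (le_of_not_gt fun hlt => lt_irrefl (2 ^ m * 2 ^ m) ?_)
    calc 2 ^ m * 2 ^ m = #(frobFixed F m) * #(univ.image (relTrace F m)) := hcard
      _ ≤ #(frobFixed F m) * #(frobFixed F m) := Nat.mul_le_mul_left _ (card_le_card hsub)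
      _ < 2 ^ m * 2 ^ m := Nat.mul_self_lt_mul_self hlt
  refine ⟨eq_of_subset_of_card_le hsub ?_, hK⟩
  rw [hK] at hcard ⊢
  exact (Nat.eq_of_mul_eq_mul_left (by positivity) hcard).le

end RelTrace

theorem stmt_4 (m : ℕ) (hm : 1 ≤ m) (F : Type*) [Field F] [Fintype F] [DecidableEq F]
    (hF : Fintype.card F = 2 ^ (2 * m)) (μ : F) (hμ : μ ^ 2 ^ m = μ) (hμ0 : μ ≠ 0) :
    ∑ a ∈ univ.filter (fun a : F => a ^ 2 ^ m ≠ a),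
        chi (2 * m) (μ * (a ^ 2 + a) / (a ^ 2 ^ m + a))
      = -2 ^ m * chi m μ := by
  have hm0 : m ≠ 0 := by omega
  have : CharP F 2 := charP_two_of_card_eq_two_pow (by omega) hF
  obtain ⟨himage, hcard⟩ := image_relTrace_eq_frobFixed hF hm0
  have hμK : μ ∈ frobFixed F m := mem_frobFixed.2 hμ
  have hpoint : ∀ a ∈ univ.filter (fun a : F => a ^ 2 ^ m ≠ a),
      chi (2 * m) (μ * (a ^ 2 + a) / (a ^ 2 ^ m + a)) = chi m (μ * (relTrace F m a + 1)) := by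
    intro a ha
    have hv : relTrace F m a ≠ 0 := by
      simpa [relTrace_eq_zero_iff, mem_frobFixed] using ha
    rw [chi_two_mul, ← relTrace_apply,
      add_pow_eq_mul_relTrace_add_one hμ (pow_two_pow_pow_two_pow hF a) hv]
  have hsum : ∑ a, chi m (μ * (relTrace F m a + 1)) = 0 := by
    rw [(relTrace F m).sum_comp_eq_card_ker_nsmul fun b => chi m (μ * (b + 1)), himage,
      sum_frobFixed_add (mem_frobFixed.2 (one_pow _)) fun c => chi m (μ * c),
      sum_frobFixed_mul hμK hμ0, sum_chi_frobFixed_eq_zero hm0 hcard, smul_zero]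
  have hfixed : ∑ a ∈ frobFixed F m, chi m (μ * (relTrace F m a + 1)) = 2 ^ m * chi m μ := by
    rw [sum_congr rfl fun a ha => by rw [relTrace_eq_zero_iff.2 ha, zero_add, mul_one],
      sum_const, hcard, nsmul_eq_mul, Nat.cast_pow, Nat.cast_ofNat]
  rw [sum_congr rfl hpoint]
  have := sum_filter_add_sum_filter_not univ (fun a : F => a ^ 2 ^ m = a)
    fun a => chi m (μ * (relTrace F m a + 1))
  rw [← frobFixed, hfixed, hsum] at this
  linarith
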